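/- Let R be a semiring in which R \ {0} is closed under addition and multiplication, and let (V1, b1), (V2, b2) be indecomposable free bilinear R-modules of rank ≥ 2 (not ⟨0⟩) with alternate forms (b_i(ε,ε) = 0 on base vectors). If V1 or V2 contains an odd cycle in its base with respect to b_i, then (V1 ⊗ V2, b1 ⊗ b2) is indecomposable; otherwise V1 ⊗ V2 is the orthogonal sum of exactly two indecomposable components. -/

import Mathlib

open TensorProduct

/-- `B` is a base of the `R`-module `V`. -/
def IsBaseSet (R : Type*) [CommSemiring R] {V : Type*} [AddCommMonoid V] [Module R V]
    (B : Set V) : Prop :=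
  ∀ x : V, ∃! c : B →₀ R, x = c.sum fun b r => r • (b : V)

/-- The basic submodule with base `S` is indecomposable for the bilinear form `β`. -/
def BIndecompOn {R : Type*} [CommSemiring R] {V : Type*} [AddCommMonoid V] [Module R V]
    (β : V →ₗ[R] V →ₗ[R] R) (S : Set V) : Prop :=
  ¬ ∃ S₁ S₂ : Set V, S₁ ∪ S₂ = S ∧ Disjoint S₁ S₂ ∧ S₁.Nonempty ∧ S₂.Nonempty ∧
      Submodule.span R S₁ ⊓ Submodule.span R S₂ = ⊥ ∧
      ∀ x ∈ Submodule.span R S₁, ∀ y ∈ Submodule.span R S₂, β x y = 0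

/-- The base `B` contains an odd cycle with respect to (the alternation of) `β`. -/
def HasOddCycle {R : Type*} [CommSemiring R] {V : Type*} [AddCommMonoid V] [Module R V]
    (β : V →ₗ[R] V →ₗ[R] R) (B : Set V) : Prop :=
  ∃ (n : ℕ) (c : Fin (n + 1) → V), Odd n ∧ (∀ i, c i ∈ B) ∧ c 0 = c (Fin.last n) ∧
    ∀ i : Fin n, c i.castSucc ≠ c i.succ ∧ β (c i.castSucc) (c i.succ) ≠ 0

/-!
Join two base vectors by an edge when the form does not vanish on them. For a linearly
independent base the indecomposable components are exactly the connected components of this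
graph, and since `R \ {0}` is multiplicatively closed, the graph of `V₁ ⊗ V₂` is the tensor
product of the two graphs: `ε ⊗ η` and `ε' ⊗ η'` are joined iff there are walks `ε → ε'` and
`η → η'` of the same length. In a connected graph with an edge at every vertex a walk can be
lengthened by going back and forth, so only the parity of lengths matters. An odd cycle in one
factor gives walks of both parities, making the product connected; if both factors are
bipartite, the parity of `d(ε₀, ε) + d(η₀, η)` separates exactly two components.
-/

namespace SimpleGraph

variable {V W : Type*} {G : SimpleGraph V} {H : SimpleGraph W}

def tensorProd (G : SimpleGraph V) (H : SimpleGraph W) : SimpleGraph (V × W) where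
  Adj x y := G.Adj x.1 y.1 ∧ H.Adj x.2 y.2
  symm.symm _ _ h := ⟨h.1.symm, h.2.symm⟩
  loopless.irrefl _ h := G.irrefl h.1

@[simp] theorem tensorProd_adj {x y : V × W} :
    (G.tensorProd H).Adj x y ↔ G.Adj x.1 y.1 ∧ H.Adj x.2 y.2 := Iff.rfl

theorem Reachable.mem_of_adj_closed {s : Set V} (hs : ∀ a ∈ s, ∀ b, G.Adj a b → b ∈ s)
    {u v : V} (h : G.Reachable u v) (hu : u ∈ s) : v ∈ s := by
  obtain ⟨p⟩ := h
  induction p with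
  | nil => exact hu
  | cons h _ ih => exact ih (hs _ hu _ h)

theorem Reachable.exists_lift {G' : SimpleGraph W} {f : V → W} {s : Set V}
    (hf : ∀ a ∈ s, ∀ z, G'.Adj (f a) z → ∃ b ∈ s, f b = z ∧ G.Adj a b) {a : V} (ha : a ∈ s)
    {z : W} (h : G'.Reachable (f a) z) : ∃ b ∈ s, f b = z ∧ G.Reachable a b := by
  suffices ∀ {u} (p : G'.Walk u z) {a}, a ∈ s → f a = u → ∃ b ∈ s, f b = z ∧ G.Reachable a b from
    h.elim fun p => this p ha rfl
  clear h
  intro u p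
  induction p with
  | nil => exact fun ha hu => ⟨_, ha, hu, .refl _⟩
  | cons h _ ih =>
    intro a ha hau
    subst hau
    obtain ⟨b, hb, rfl, hab⟩ := hf a ha _ h
    obtain ⟨c, hc, hcz, hbc⟩ := ih hb rfl
    exact ⟨c, hc, hcz, hab.reachable.trans hbc⟩

theorem exists_adj_of_forall_reachable {s : Set V} (hs : s.Nontrivial)
    (hconn : ∀ x ∈ s, ∀ y ∈ s, G.Reachable x y) {x : V} (hx : x ∈ s) : ∃ y, G.Adj x y := by
  obtain ⟨y, hy, hyx⟩ := hs.exists_ne x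
  obtain ⟨p⟩ := hconn x hx y hy
  cases p with
  | nil => exact absurd rfl hyx
  | cons h _ => exact ⟨_, h⟩

theorem exists_walk_of_adj_castSucc_succ : ∀ {n : ℕ} (c : Fin (n + 1) → V),
    (∀ i : Fin n, G.Adj (c i.castSucc) (c i.succ)) →
      ∃ p : G.Walk (c 0) (c (Fin.last n)), p.length = n
  | 0, _, _ => ⟨.nil, rfl⟩
  | n + 1, c, h => by
    obtain ⟨p, hp⟩ : ∃ p : G.Walk (c 1) (c (Fin.last (n + 1))), p.length = n :=
      exists_walk_of_adj_castSucc_succ (Fin.tail c) fun i => h i.succ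
    exact ⟨.cons (h 0) p, congrArg (· + 1) hp⟩

namespace Walk

theorem exists_length_eq_add_two_mul {u v w : V} (p : G.Walk u v) (h : G.Adj v w) (k : ℕ) :
    ∃ q : G.Walk u v, q.length = p.length + 2 * k := by
  induction k with
  | zero => exact ⟨p, rfl⟩
  | succ k ih =>
    obtain ⟨q, hq⟩ := ih
    exact ⟨q.append (.cons h (.cons h.symm .nil)), by simp [hq]; ring⟩

theorem exists_odd_length_add {u v w : V} (p : G.Walk u v) (c : G.Walk w w)
    (hc : Odd c.length) (hvw : G.Reachable v w) : ∃ q : G.Walk u v, Odd (p.length + q.length) := by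
  obtain ⟨r⟩ := hvw
  refine ⟨p.append (r.append (c.append r.reverse)), ?_⟩
  convert hc.add_even (even_two_mul (p.length + r.length)) using 1
  simp only [length_append, length_reverse]
  ring

end Walk

theorem reachable_tensorProd_of_length_eq : ∀ {x x' : V} {y y' : W} (p : G.Walk x x')
    (q : H.Walk y y'), p.length = q.length → (G.tensorProd H).Reachable (x, y) (x', y')
  | _, _, _, _, .nil, .nil, _ => .refl _
  | _, _, _, _, .cons hp p, .cons hq q, h =>
    (tensorProd_adj.2 ⟨hp, hq⟩).reachable.trans
      (reachable_tensorProd_of_length_eq p q (by simpa using h))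
  | _, _, _, _, .nil, .cons _ _, h => by simp at h
  | _, _, _, _, .cons _ _, .nil, h => by simp at h

theorem reachable_tensorProd_of_even_add {x x' : V} {y y' : W} (p : G.Walk x x')
    (q : H.Walk y y') (hpq : Even (p.length + q.length)) (hx' : ∃ z, G.Adj x' z)
    (hy' : ∃ z, H.Adj y' z) : (G.tensorProd H).Reachable (x, y) (x', y') := by
  obtain ⟨r, hr⟩ := hpq
  obtain ⟨_, hx'⟩ := hx'
  obtain ⟨_, hy'⟩ := hy'
  rcases le_total p.length q.length with hle | hle
  · obtain ⟨p', hp'⟩ := p.exists_length_eq_add_two_mul hx' (r - p.length)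
    exact reachable_tensorProd_of_length_eq p' q (by omega)
  · obtain ⟨q', hq'⟩ := q.exists_length_eq_add_two_mul hy' (r - q.length)
    exact reachable_tensorProd_of_length_eq p q' (by omega)

theorem Reachable.exists_walks_of_tensorProd {a b : V × W} (h : (G.tensorProd H).Reachable a b) :
    ∃ (p : G.Walk a.1 b.1) (q : H.Walk a.2 b.2), p.length = q.length := by
  obtain ⟨r⟩ := h
  exact ⟨r.map (⟨Prod.fst, fun h => (tensorProd_adj.1 h).1⟩ : G.tensorProd H →g G),
    r.map (⟨Prod.snd, fun h => (tensorProd_adj.1 h).2⟩ : G.tensorProd H →g H), by simp⟩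

theorem reachable_tensorProd_of_odd_left {s : Set V} {t : Set W} (hs : s.Nontrivial)
    (ht : t.Nontrivial) (hG : ∀ x ∈ s, ∀ x' ∈ s, G.Reachable x x')
    (hH : ∀ y ∈ t, ∀ y' ∈ t, H.Reachable y y') (hodd : ∃ w ∈ s, ∃ c : G.Walk w w, Odd c.length)
    {a b : V × W} (ha : a ∈ s ×ˢ t) (hb : b ∈ s ×ˢ t) : (G.tensorProd H).Reachable a b := by
  obtain ⟨w, hw, c, hc⟩ := hodd
  obtain ⟨p⟩ := hG a.1 ha.1 b.1 hb.1
  obtain ⟨q⟩ := hH a.2 ha.2 b.2 hb.2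
  have hx := exists_adj_of_forall_reachable hs hG hb.1
  have hy := exists_adj_of_forall_reachable ht hH hb.2
  by_cases hpq : Even (p.length + q.length)
  · exact reachable_tensorProd_of_even_add p q hpq hx hy
  · obtain ⟨p', hp'⟩ := p.exists_odd_length_add c hc (hG _ hb.1 w hw)
    refine reachable_tensorProd_of_even_add p' q ?_ hx hy
    rw [Nat.even_iff] at hpq ⊢
    rw [Nat.odd_iff] at hp'
    omega

theorem reachable_tensorProd_of_odd {s : Set V} {t : Set W} (hs : s.Nontrivial)
    (ht : t.Nontrivial) (hG : ∀ x ∈ s, ∀ x' ∈ s, G.Reachable x x')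
    (hH : ∀ y ∈ t, ∀ y' ∈ t, H.Reachable y y')
    (hodd : (∃ w ∈ s, ∃ c : G.Walk w w, Odd c.length) ∨ ∃ w ∈ t, ∃ c : H.Walk w w, Odd c.length)
    {a b : V × W} (ha : a ∈ s ×ˢ t) (hb : b ∈ s ×ˢ t) : (G.tensorProd H).Reachable a b := by
  rcases hodd with hodd | hodd
  · exact reachable_tensorProd_of_odd_left hs ht hG hH hodd ha hb
  · let swap : H.tensorProd G →g G.tensorProd H :=
      ⟨Prod.swap, fun h => tensorProd_adj.2 (tensorProd_adj.1 h).symm⟩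
    simpa [swap] using (reachable_tensorProd_of_odd_left ht hs hH hG hodd (a := a.swap)
      (b := b.swap) ⟨ha.2, ha.1⟩ ⟨hb.2, hb.1⟩).map swap

theorem reachable_tensorProd_or {s : Set V} {t : Set W} (hs : s.Nontrivial) (ht : t.Nontrivial)
    (hG : ∀ x ∈ s, ∀ x' ∈ s, G.Reachable x x') (hH : ∀ y ∈ t, ∀ y' ∈ t, H.Reachable y y')
    {x₀ x₁ : V} {y₀ : W} (hx₀ : x₀ ∈ s) (hy₀ : y₀ ∈ t) (h : G.Adj x₀ x₁) {a : V × W}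
    (ha : a ∈ s ×ˢ t) :
    (G.tensorProd H).Reachable (x₀, y₀) a ∨ (G.tensorProd H).Reachable (x₁, y₀) a := by
  obtain ⟨p⟩ := hG x₀ hx₀ a.1 ha.1
  obtain ⟨q⟩ := hH y₀ hy₀ a.2 ha.2
  have hx := exists_adj_of_forall_reachable hs hG ha.1
  have hy := exists_adj_of_forall_reachable ht hH ha.2
  by_cases hpq : Even (p.length + q.length)
  · exact .inl (reachable_tensorProd_of_even_add p q hpq hx hy)
  · refine .inr (reachable_tensorProd_of_even_add (.cons h.symm p) q ?_ hx hy)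
    rw [Walk.length_cons, add_right_comm]
    exact (Nat.not_even_iff_odd.1 hpq).add_one

theorem not_reachable_tensorProd {s : Set V} {t : Set W}
    (hG : ¬∃ x ∈ s, ∃ c : G.Walk x x, Odd c.length) (hH : ¬∃ y ∈ t, ∃ c : H.Walk y y, Odd c.length)
    {x₀ x₁ : V} {y₀ : W} (hx₀ : x₀ ∈ s) (hy₀ : y₀ ∈ t) (h : G.Adj x₀ x₁) :
    ¬(G.tensorProd H).Reachable (x₀, y₀) (x₁, y₀) := by
  intro hr
  obtain ⟨p, q, hpq⟩ := hr.exists_walks_of_tensorProd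
  have hq : Even q.length := Nat.not_odd_iff_even.1 fun hq => hH ⟨y₀, hy₀, q, hq⟩
  refine hG ⟨x₀, hx₀, p.concat h.symm, ?_⟩
  rw [Walk.length_concat, hpq]
  exact hq.add_one

end SimpleGraph

section BaseGraph

variable {R V : Type*} [CommSemiring R] [AddCommMonoid V] [Module R V]
  {β : V →ₗ[R] V →ₗ[R] R} {B T : Set V}

/-- The paths in the base `B` are the walks of this graph; vertices outside `B` are isolated. -/
def baseGraph (β : V →ₗ[R] V →ₗ[R] R) (B : Set V) : SimpleGraph V :=
  SimpleGraph.fromRel fun x y => x ∈ B ∧ y ∈ B ∧ β x y ≠ 0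

theorem baseGraph_adj (hsymm : ∀ x y, β x y = β y x) {x y : V} :
    (baseGraph β B).Adj x y ↔ x ≠ y ∧ x ∈ B ∧ y ∈ B ∧ β x y ≠ 0 := by
  rw [baseGraph, SimpleGraph.fromRel_adj, hsymm y x]
  tauto

theorem mem_of_baseGraph_adj {x y : V} (h : (baseGraph β B).Adj x y) : x ∈ B ∧ y ∈ B := by
  rw [baseGraph, SimpleGraph.fromRel_adj] at h
  tauto

theorem orthogonal_span {S₁ S₂ : Set V} (h : ∀ x ∈ S₁, ∀ y ∈ S₂, β x y = 0) :
    ∀ x ∈ Submodule.span R S₁, ∀ y ∈ Submodule.span R S₂, β x y = 0 := by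
  intro x hx y hy
  have hS₂ : ∀ x ∈ S₁, Submodule.span R S₂ ≤ LinearMap.ker (β x) :=
    fun x hx => Submodule.span_le.2 (h x hx)
  exact (Submodule.span_le.2 fun x' hx' => hS₂ x' hx' hy :
    Submodule.span R S₁ ≤ LinearMap.ker (β.flip y)) hx

theorem LinearIndepOn.span_inf_span_eq_bot (hT : LinearIndepOn R id T) {S₁ S₂ : Set V}
    (h₁ : S₁ ⊆ T) (h₂ : S₂ ⊆ T) (hdisj : Disjoint S₁ S₂) :
    Submodule.span R S₁ ⊓ Submodule.span R S₂ = ⊥ := by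
  have := LinearIndependent.disjoint_span_image hT (hdisj.preimage ((↑) : T → V))
  simpa [Set.inter_eq_right.2 h₁, Set.inter_eq_right.2 h₂, disjoint_iff] using this

theorem BIndecompOn.reachable (hB : LinearIndepOn R id B) (h : BIndecompOn β B) :
    ∀ x ∈ B, ∀ y ∈ B, (baseGraph β B).Reachable x y := by
  intro x hx y hy
  by_contra hxy
  set C := {u | (baseGraph β B).Reachable x u}
  have hdisj : Disjoint (B ∩ C) (B \ C) := Set.disjoint_sdiff_inter.symm
  refine h ⟨B ∩ C, B \ C, Set.inter_union_sdiff B C, hdisj, ⟨x, hx, .refl x⟩, ⟨y, hy, hxy⟩,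
    hB.span_inf_span_eq_bot Set.inter_subset_left Set.sdiff_subset hdisj, orthogonal_span ?_⟩
  rintro u ⟨hu, hxu⟩ v ⟨hv, hxv⟩
  by_contra huv
  have hne : u ≠ v := fun h => hxv (h ▸ hxu)
  exact hxv (hxu.trans ((SimpleGraph.fromRel_adj _ _ _).2 ⟨hne, .inl ⟨hu, hv, huv⟩⟩).reachable)

theorem bIndecompOn_of_forall_reachable (hsymm : ∀ x y, β x y = β y x) {S : Set V}
    (hS : ∀ a ∈ S, ∀ b, (baseGraph β T).Adj a b → b ∈ S)
    (hreach : ∀ x ∈ S, ∀ y ∈ S, (baseGraph β T).Reachable x y) : BIndecompOn β S := by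
  rintro ⟨S₁, S₂, rfl, hdisj, ⟨s, hs⟩, ⟨t, ht⟩, -, horth⟩
  have hS₁ : ∀ a ∈ S₁, ∀ b, (baseGraph β T).Adj a b → b ∈ S₁ := by
    intro a ha b hab
    refine (hS a (.inl ha) b hab).resolve_right fun hb => ?_
    exact ((baseGraph_adj hsymm).1 hab).2.2.2
      (horth a (Submodule.subset_span ha) b (Submodule.subset_span hb))
  exact Set.disjoint_left.1 hdisj ((hreach s (.inl hs) t (.inr ht)).mem_of_adj_closed hS₁ hs) ht

theorem exists_orthogonal_union_bIndecompOn (hT : LinearIndepOn R id T)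
    (hsymm : ∀ x y, β x y = β y x) {z₀ z₁ : V} (hz₀ : z₀ ∈ T) (hz₁ : z₁ ∈ T)
    (hcover : ∀ z ∈ T, (baseGraph β T).Reachable z₀ z ∨ (baseGraph β T).Reachable z₁ z)
    (hsep : ¬(baseGraph β T).Reachable z₀ z₁) :
    ∃ C₁ C₂ : Set V, C₁ ∪ C₂ = T ∧ Disjoint C₁ C₂ ∧ C₁.Nonempty ∧ C₂.Nonempty ∧
      Submodule.span R C₁ ⊓ Submodule.span R C₂ = ⊥ ∧
      (∀ x ∈ Submodule.span R C₁, ∀ y ∈ Submodule.span R C₂, β x y = 0) ∧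
      BIndecompOn β C₁ ∧ BIndecompOn β C₂ := by
  set Γ := baseGraph β T
  have hsub : ∀ {z}, z ∈ T → {w | Γ.Reachable z w} ⊆ T := fun hz _ h =>
    h.mem_of_adj_closed (fun _ _ _ hab => (mem_of_baseGraph_adj hab).2) hz
  have hunion : {w | Γ.Reachable z₀ w} ∪ {w | Γ.Reachable z₁ w} = T :=
    (Set.union_subset (hsub hz₀) (hsub hz₁)).antisymm hcover
  have hdisj : Disjoint {w | Γ.Reachable z₀ w} {w | Γ.Reachable z₁ w} :=
    Set.disjoint_left.2 fun w h₀ h₁ => hsep (h₀.trans h₁.symm)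
  have hcomp (z : V) : BIndecompOn β {w | Γ.Reachable z w} :=
    bIndecompOn_of_forall_reachable hsymm (fun _ ha _ hab => ha.trans hab.reachable)
      fun _ hx _ hy => hx.symm.trans hy
  refine ⟨_, _, hunion, hdisj, ⟨z₀, .refl _⟩, ⟨z₁, .refl _⟩,
    hT.span_inf_span_eq_bot (hsub hz₀) (hsub hz₁) hdisj,
    orthogonal_span fun x hx y hy => ?_, hcomp z₀, hcomp z₁⟩
  by_contra hxy
  have hne : x ≠ y := fun h => Set.disjoint_left.1 hdisj hx (h ▸ hy)
  have hadj : Γ.Adj x y := (baseGraph_adj hsymm).2 ⟨hne, hsub hz₀ hx, hsub hz₁ hy, hxy⟩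
  exact hsep ((hx.trans hadj.reachable).trans hy.symm)

theorem hasOddCycle_iff (hsymm : ∀ x y, β x y = β y x) :
    HasOddCycle β B ↔ ∃ x ∈ B, ∃ c : (baseGraph β B).Walk x x, Odd c.length := by
  constructor
  · rintro ⟨n, c, hn, hcB, hcl, hc⟩
    obtain ⟨p, hp⟩ := SimpleGraph.exists_walk_of_adj_castSucc_succ c fun i =>
      (baseGraph_adj hsymm).2 ⟨(hc i).1, hcB _, hcB _, (hc i).2⟩
    exact ⟨c 0, hcB 0, p.copy rfl hcl.symm, by simpa [hp] using hn⟩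
  · rintro ⟨x, hx, c, hc⟩
    have hadj (i : ℕ) (hi : i < c.length) := (baseGraph_adj hsymm).1 (c.adj_getVert_succ hi)
    refine ⟨c.length, fun i => c.getVert i, hc, fun i => ?_, by simp, fun i => ?_⟩
    · rcases lt_or_ge i.val c.length with hi | hi
      · exact (hadj i hi).2.1
      · simpa [c.getVert_of_length_le hi] using hx
    · simpa using And.intro (hadj i i.isLt).1 (hadj i i.isLt).2.2.2

end BaseGraph

namespace IsBaseSet

variable {R V : Type*} [CommSemiring R] [AddCommMonoid V] [Module R V] {B : Set V}

theorem bijective (h : IsBaseSet R B) :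
    Function.Bijective (Finsupp.linearCombination R ((↑) : B → V)) :=
  (Function.bijective_iff_existsUnique _).2 fun x => by
    simpa [Finsupp.linearCombination_apply, eq_comm] using h x

theorem linearIndepOn (h : IsBaseSet R B) : LinearIndepOn R id B :=
  h.bijective.1

noncomputable def basis (h : IsBaseSet R B) : Module.Basis B R V :=
  .ofRepr (LinearEquiv.ofBijective _ h.bijective).symm

@[simp] theorem coe_basis (h : IsBaseSet R B) : ⇑h.basis = ((↑) : B → V) := by
  ext i
  simp [basis]

end IsBaseSet

section Tensor

variable {R V₁ V₂ : Type*} [CommSemiring R] [AddCommMonoid V₁] [Module R V₁]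
  [AddCommMonoid V₂] [Module R V₂] {B₁ : Set V₁} {B₂ : Set V₂}

variable (R) in
def tensorBase (B₁ : Set V₁) (B₂ : Set V₂) : Set (V₁ ⊗[R] V₂) :=
  (fun p => p.1 ⊗ₜ[R] p.2) '' (B₁ ×ˢ B₂)

theorem IsBaseSet.injOn_tmul [Nontrivial R] (h₁ : IsBaseSet R B₁) (h₂ : IsBaseSet R B₂) :
    Set.InjOn (fun p : V₁ × V₂ => p.1 ⊗ₜ[R] p.2) (B₁ ×ˢ B₂) := by
  intro p hp q hq hpq
  have := (h₁.basis.tensorProduct h₂.basis).injective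
    (a₁ := (⟨p.1, hp.1⟩, ⟨p.2, hp.2⟩)) (a₂ := (⟨q.1, hq.1⟩, ⟨q.2, hq.2⟩)) (by simpa using hpq)
  simpa [Prod.ext_iff] using this

theorem IsBaseSet.linearIndepOn_tensorBase [Nontrivial R] (h₁ : IsBaseSet R B₁)
    (h₂ : IsBaseSet R B₂) : LinearIndepOn R id (tensorBase R B₁ B₂) := by
  let b := h₁.basis.tensorProduct h₂.basis
  have hb : Set.range b = tensorBase R B₁ B₂ := by
    ext z
    simp [b, tensorBase]
  exact hb ▸ (linearIndepOn_id_range_iff b.injective).2 b.linearIndependent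

variable {b₁ : V₁ →ₗ[R] V₁ →ₗ[R] R} {b₂ : V₂ →ₗ[R] V₂ →ₗ[R] R}
  {G : V₁ ⊗[R] V₂ →ₗ[R] V₁ ⊗[R] V₂ →ₗ[R] R}

theorem symm_of_tmul (hG : ∀ x₁ x₂ y₁ y₂, G (x₁ ⊗ₜ y₁) (x₂ ⊗ₜ y₂) = b₁ x₁ x₂ * b₂ y₁ y₂)
    (hsymm₁ : ∀ x y, b₁ x y = b₁ y x) (hsymm₂ : ∀ x y, b₂ x y = b₂ y x) :
    ∀ z z', G z z' = G z' z := by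
  have hflip : G = G.flip := TensorProduct.ext' fun x y => TensorProduct.ext' fun x' y' => by
    simp [hG, hsymm₁ x, hsymm₂ y]
  exact fun z z' => LinearMap.congr_fun₂ hflip z z'

theorem baseGraph_adj_tmul (hmul : ∀ a b : R, a * b = 0 → a = 0 ∨ b = 0)
    (hG : ∀ x₁ x₂ y₁ y₂, G (x₁ ⊗ₜ y₁) (x₂ ⊗ₜ y₂) = b₁ x₁ x₂ * b₂ y₁ y₂)
    (hsymm₁ : ∀ x y, b₁ x y = b₁ y x) (hsymm₂ : ∀ x y, b₂ x y = b₂ y x)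
    (halt₁ : ∀ x ∈ B₁, b₁ x x = 0) {x x' : V₁} {y y' : V₂}
    (h₁ : (baseGraph b₁ B₁).Adj x x') (h₂ : (baseGraph b₂ B₂).Adj y y') :
    (baseGraph G (tensorBase R B₁ B₂)).Adj (x ⊗ₜ y) (x' ⊗ₜ y') := by
  obtain ⟨-, hx, hx', hb₁⟩ := (baseGraph_adj hsymm₁).1 h₁
  obtain ⟨-, hy, hy', hb₂⟩ := (baseGraph_adj hsymm₂).1 h₂
  have hGxy : G (x ⊗ₜ y) (x' ⊗ₜ y') ≠ 0 := by
    rw [hG]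
    exact fun h => (hmul _ _ h).elim hb₁ hb₂
  refine (baseGraph_adj (symm_of_tmul hG hsymm₁ hsymm₂)).2
    ⟨fun h => hGxy ?_, ⟨(x, y), ⟨hx, hy⟩, rfl⟩, ⟨(x', y'), ⟨hx', hy'⟩, rfl⟩, hGxy⟩
  rw [← h, hG, halt₁ x hx, zero_mul]

theorem exists_adj_of_baseGraph_adj_tmul
    (hG : ∀ x₁ x₂ y₁ y₂, G (x₁ ⊗ₜ y₁) (x₂ ⊗ₜ y₂) = b₁ x₁ x₂ * b₂ y₁ y₂)
    (hsymm₁ : ∀ x y, b₁ x y = b₁ y x) (hsymm₂ : ∀ x y, b₂ x y = b₂ y x)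
    (halt₁ : ∀ x ∈ B₁, b₁ x x = 0) (halt₂ : ∀ y ∈ B₂, b₂ y y = 0) {a : V₁ × V₂}
    (ha : a ∈ B₁ ×ˢ B₂) {z : V₁ ⊗[R] V₂}
    (h : (baseGraph G (tensorBase R B₁ B₂)).Adj (a.1 ⊗ₜ a.2) z) :
    ∃ b ∈ B₁ ×ˢ B₂, b.1 ⊗ₜ b.2 = z ∧ ((baseGraph b₁ B₁).tensorProd (baseGraph b₂ B₂)).Adj a b := by
  obtain ⟨-, -, ⟨b, hb, rfl⟩, hab⟩ := (baseGraph_adj (symm_of_tmul hG hsymm₁ hsymm₂)).1 h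
  rw [hG] at hab
  refine ⟨b, hb, rfl, (baseGraph_adj hsymm₁).2 ⟨?_, ha.1, hb.1, left_ne_zero_of_mul hab⟩,
    (baseGraph_adj hsymm₂).2 ⟨?_, ha.2, hb.2, right_ne_zero_of_mul hab⟩⟩
  · intro h
    rw [← h, halt₁ _ ha.1, zero_mul] at hab
    exact hab rfl
  · intro h
    rw [← h, halt₂ _ ha.2, mul_zero] at hab
    exact hab rfl

end Tensor

theorem tensor_alternate_indecomposable_general {R : Type*} [CommSemiring R]
    (hmul : ∀ a b : R, a * b = 0 → a = 0 ∨ b = 0)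
    {V₁ V₂ : Type*} [AddCommMonoid V₁] [Module R V₁] [AddCommMonoid V₂] [Module R V₂]
    (B₁ : Set V₁) (hB₁ : IsBaseSet R B₁) (B₂ : Set V₂) (hB₂ : IsBaseSet R B₂)
    (b₁ : V₁ →ₗ[R] V₁ →ₗ[R] R) (b₂ : V₂ →ₗ[R] V₂ →ₗ[R] R)
    (hsymm₁ : ∀ x y, b₁ x y = b₁ y x) (hsymm₂ : ∀ x y, b₂ x y = b₂ y x)
    (halt₁ : ∀ x ∈ B₁, b₁ x x = 0) (halt₂ : ∀ y ∈ B₂, b₂ y y = 0)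
    (hrank₁ : B₁.Nontrivial) (hrank₂ : B₂.Nontrivial)
    (hind₁ : BIndecompOn b₁ B₁) (hind₂ : BIndecompOn b₂ B₂)
    (G : V₁ ⊗[R] V₂ →ₗ[R] V₁ ⊗[R] V₂ →ₗ[R] R)
    (hG : ∀ (x₁ x₂ : V₁) (y₁ y₂ : V₂),
      G (x₁ ⊗ₜ[R] y₁) (x₂ ⊗ₜ[R] y₂) = b₁ x₁ x₂ * b₂ y₁ y₂)
    (TB : Set (V₁ ⊗[R] V₂))
    (hTB : TB = {z | ∃ x ∈ B₁, ∃ y ∈ B₂, z = x ⊗ₜ[R] y}) :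
    ((HasOddCycle b₁ B₁ ∨ HasOddCycle b₂ B₂) → BIndecompOn G TB) ∧
    (¬ (HasOddCycle b₁ B₁ ∨ HasOddCycle b₂ B₂) →
      ∃ C₁ C₂ : Set (V₁ ⊗[R] V₂), C₁ ∪ C₂ = TB ∧ Disjoint C₁ C₂ ∧
        C₁.Nonempty ∧ C₂.Nonempty ∧
        Submodule.span R C₁ ⊓ Submodule.span R C₂ = ⊥ ∧
        (∀ x ∈ Submodule.span R C₁, ∀ y ∈ Submodule.span R C₂, G x y = 0) ∧
        BIndecompOn G C₁ ∧ BIndecompOn G C₂) := by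
  have := Set.nontrivial_of_nontrivial hrank₁
  have := Module.nontrivial R V₁
  obtain rfl : TB = tensorBase R B₁ B₂ := hTB.trans (by ext; simp [tensorBase, eq_comm])
  have hGsymm := symm_of_tmul hG hsymm₁ hsymm₂
  have hconn₁ := hind₁.reachable hB₁.linearIndepOn
  have hconn₂ := hind₂.reachable hB₂.linearIndepOn
  let φ : (baseGraph b₁ B₁).tensorProd (baseGraph b₂ B₂) →g baseGraph G (tensorBase R B₁ B₂) :=
    ⟨fun p => p.1 ⊗ₜ p.2, fun h => baseGraph_adj_tmul hmul hG hsymm₁ hsymm₂ halt₁ h.1 h.2⟩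
  refine ⟨fun hodd => ?_, fun hno => ?_⟩
  · refine bIndecompOn_of_forall_reachable hGsymm (fun _ _ _ h => (mem_of_baseGraph_adj h).2) ?_
    rintro _ ⟨a, ha, rfl⟩ _ ⟨b, hb, rfl⟩
    exact (SimpleGraph.reachable_tensorProd_of_odd hrank₁ hrank₂ hconn₁ hconn₂
      (hodd.imp (hasOddCycle_iff hsymm₁).1 (hasOddCycle_iff hsymm₂).1) ha hb).map φ
  rw [not_or, hasOddCycle_iff hsymm₁, hasOddCycle_iff hsymm₂] at hno
  obtain ⟨ε₀, hε₀⟩ := hrank₁.nonempty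
  obtain ⟨η₀, hη₀⟩ := hrank₂.nonempty
  obtain ⟨ε₁, hε₀₁⟩ := SimpleGraph.exists_adj_of_forall_reachable hrank₁ hconn₁ hε₀
  have hε₁ := (mem_of_baseGraph_adj hε₀₁).2
  refine exists_orthogonal_union_bIndecompOn (hB₁.linearIndepOn_tensorBase hB₂) hGsymm
    ⟨(ε₀, η₀), ⟨hε₀, hη₀⟩, rfl⟩ ⟨(ε₁, η₀), ⟨hε₁, hη₀⟩, rfl⟩ ?_ fun h => ?_
  · rintro _ ⟨a, ha, rfl⟩
    exact (SimpleGraph.reachable_tensorProd_or hrank₁ hrank₂ hconn₁ hconn₂ hε₀ hη₀ hε₀₁ ha).imp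
      (·.map φ) (·.map φ)
  obtain ⟨b, hb, hbε₁, hr⟩ := h.exists_lift (f := fun p : V₁ × V₂ => p.1 ⊗ₜ[R] p.2)
    (fun _ ha _ h => exists_adj_of_baseGraph_adj_tmul hG hsymm₁ hsymm₂ halt₁ halt₂ ha h)
    (a := (ε₀, η₀)) ⟨hε₀, hη₀⟩
  obtain rfl := hB₁.injOn_tmul hB₂ hb ⟨hε₁, hη₀⟩ hbε₁
  exact SimpleGraph.not_reachable_tensorProd hno.1 hno.2 hε₀ hη₀ hε₀₁ hr

/-- Over a semiring `R` with `R \ {0}` closed under addition and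
multiplication, let `(V₁, b₁)` and `(V₂, b₂)` be indecomposable free bilinear modules of
rank ≥ 2 with alternate forms.  If `V₁` or `V₂` contains an odd cycle then
`(V₁ ⊗ V₂, b₁ ⊗ b₂)` is indecomposable; otherwise `V₁ ⊗ V₂` is the orthogonal sum of
exactly two indecomposable components. -/
theorem tensor_alternate_indecomposable {R : Type*} [CommSemiring R]
    (hadd : ∀ a b : R, a + b = 0 → a = 0 ∧ b = 0)
    (hmul : ∀ a b : R, a * b = 0 → a = 0 ∨ b = 0)
    {V₁ V₂ : Type*} [AddCommMonoid V₁] [Module R V₁] [AddCommMonoid V₂] [Module R V₂]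
    (B₁ : Set V₁) (hB₁ : IsBaseSet R B₁) (B₂ : Set V₂) (hB₂ : IsBaseSet R B₂)
    (b₁ : V₁ →ₗ[R] V₁ →ₗ[R] R) (b₂ : V₂ →ₗ[R] V₂ →ₗ[R] R)
    (hsymm₁ : ∀ x y, b₁ x y = b₁ y x) (hsymm₂ : ∀ x y, b₂ x y = b₂ y x)
    (halt₁ : ∀ x ∈ B₁, b₁ x x = 0) (halt₂ : ∀ y ∈ B₂, b₂ y y = 0)
    (hrank₁ : B₁.Nontrivial) (hrank₂ : B₂.Nontrivial)
    (hind₁ : BIndecompOn b₁ B₁) (hind₂ : BIndecompOn b₂ B₂)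
    (G : V₁ ⊗[R] V₂ →ₗ[R] V₁ ⊗[R] V₂ →ₗ[R] R)
    (hG : ∀ (x₁ x₂ : V₁) (y₁ y₂ : V₂),
      G (x₁ ⊗ₜ[R] y₁) (x₂ ⊗ₜ[R] y₂) = b₁ x₁ x₂ * b₂ y₁ y₂)
    (TB : Set (V₁ ⊗[R] V₂))
    (hTB : TB = {z | ∃ x ∈ B₁, ∃ y ∈ B₂, z = x ⊗ₜ[R] y}) :
    ((HasOddCycle b₁ B₁ ∨ HasOddCycle b₂ B₂) → BIndecompOn G TB) ∧
    (¬ (HasOddCycle b₁ B₁ ∨ HasOddCycle b₂ B₂) →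
      ∃ C₁ C₂ : Set (V₁ ⊗[R] V₂), C₁ ∪ C₂ = TB ∧ Disjoint C₁ C₂ ∧
        C₁.Nonempty ∧ C₂.Nonempty ∧
        Submodule.span R C₁ ⊓ Submodule.span R C₂ = ⊥ ∧
        (∀ x ∈ Submodule.span R C₁, ∀ y ∈ Submodule.span R C₂, G x y = 0) ∧
        BIndecompOn G C₁ ∧ BIndecompOn G C₂) :=
  tensor_alternate_indecomposable_general hmul B₁ hB₁ B₂ hB₂ b₁ b₂ hsymm₁ hsymm₂ halt₁ halt₂ hrank₁
    hrank₂ hind₁ hind₂ G hG TB hTB
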